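/- Equivalence of the team formation problem with the continuous problem: Assume assoc_S(A) > 0 for every nonempty A ⊆ V', let A_0 ⊆ V' be feasible, let θ > 0 satisfy pen(A) ≥ θ for every nonempty infeasible A ⊆ V', and let γ > (vol_d(V)/θ)·(vol_g(A_0) + ν_S)/assoc_S(A_0), where vol_d(V) = ∑_{i∈V} d(i). Define R(A) = vol_g(A) + ν_S·unit(A) + γ·pen(A). Then max over feasible A ⊆ V' of assoc_S(A)/(vol_g(A) + ν_S) equals the reciprocal of inf over f : V' → ℝ, f ≥ 0, f ≠ 0 of R^L(f)/assoc_S^L(f); moreover, if f* attains this infimum, then any threshold set A_i(f*) = {j : f*(j) ≥ f*(i)} minimizing R(A_i(f*))/assoc_S(A_i(f*)) is a feasible set maximizing assoc_S(A)/(vol_g(A) + ν_S). -/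

import Mathlib

/-! The Lovász extension of a set function `T`, evaluated at `f ≥ 0`, is a nonnegative combination
`∑ⱼ cⱼ T(Aⱼ)` of the values of `T` on threshold sets of `f`, with `∑ⱼ cⱼ = max f`. Hence a ratio of
two Lovász extensions is at least the least ratio over threshold sets, and indicator vectors attain
every set ratio: the continuous problem has the same optimum as `min R(A) / assoc_S(A)` over
nonempty `A`. On feasible sets `R = vol_g + ν_S`, while the choice of `γ` makes every infeasible set
worse than `A₀`, because `assoc_S ≤ vol_d(V)` and `pen ≥ θ` there. So that minimum is the reciprocal
of the best density of a feasible set. -/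

open Finset

/-- `Vp S` is the set of experts `V' = V \ S`, as a subtype. -/
abbrev Vp {V : Type*} [Fintype V] [DecidableEq V] (S : Finset V) := {x : V // x ∉ S}

/-- The Lovász extension of a set function `T` (with `T ∅ = 0`): choosing an enumeration
`σ(1), …, σ(m)` of the ground set with `f ∘ σ` nondecreasing (here produced by `Tuple.sort`),
`T^L(f) = ∑_{i=1}^{m−1} T({σ(i+1),…,σ(m)})·(f(σ(i+1)) − f(σ(i))) + T(V')·f(σ(1))`. -/
noncomputable def lovasz {α : Type*} [Fintype α] [DecidableEq α]
    (T : Finset α → ℝ) (f : α → ℝ) : ℝ :=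
  let m := Fintype.card α
  let e : Fin m ≃ α := (Fintype.equivFin α).symm
  let σ : Fin m → α := fun i => e (Tuple.sort (f ∘ e) i)
  (∑ i : Fin m, if h : (i : ℕ) + 1 < m then
      T ((Finset.Ici (⟨(i : ℕ) + 1, h⟩ : Fin m)).image σ) * (f (σ ⟨(i : ℕ) + 1, h⟩) - f (σ i))
    else 0)
  + T Finset.univ * (if h : 0 < m then f (σ ⟨0, h⟩) else 0)

/-- The threshold set `A_i(f) = {j ∈ V' : f(j) ≥ f(i)}`. -/
noncomputable def thresholdSet {α : Type*} [Fintype α] [DecidableEq α]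
    (f : α → ℝ) (i : α) : Finset α :=
  Finset.univ.filter (fun j => f i ≤ f j)

section Lovasz
variable {α : Type*} [Fintype α]

noncomputable def sortedEnum (f : α → ℝ) : Fin (Fintype.card α) → α :=
  fun i => (Fintype.equivFin α).symm (Tuple.sort (f ∘ (Fintype.equivFin α).symm) i)

lemma sortedEnum_surjective (f : α → ℝ) : Function.Surjective (sortedEnum f) := fun a =>
  ⟨(Tuple.sort (f ∘ (Fintype.equivFin α).symm)).symm (Fintype.equivFin α a),
    by simp [sortedEnum]⟩

lemma monotone_sortedEnum (f : α → ℝ) : Monotone (f ∘ sortedEnum f) :=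
  Tuple.monotone_sort (f ∘ (Fintype.equivFin α).symm)

variable [DecidableEq α]

lemma lovasz_eq_sortedEnum (T : Finset α → ℝ) (f : α → ℝ) :
    lovasz T f = (∑ i : Fin (Fintype.card α), if h : (i : ℕ) + 1 < Fintype.card α then
        T ((Ici (⟨i + 1, h⟩ : Fin _)).image (sortedEnum f)) *
          (f (sortedEnum f ⟨i + 1, h⟩) - f (sortedEnum f i)) else 0)
      + T univ * (if h : 0 < Fintype.card α then f (sortedEnum f ⟨0, h⟩) else 0) := rfl

lemma thresholdSet_eq_univ {f : α → ℝ} {i : α} (h : ∀ j, f i ≤ f j) : thresholdSet f i = univ :=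
  filter_true_of_mem fun j _ => h j

lemma image_Ici_eq_thresholdSet {m : ℕ} {f : α → ℝ} {σ : Fin m → α}
    (hσ : Function.Surjective σ) (hmono : Monotone (f ∘ σ)) {k : Fin m}
    (hk : ∀ i < k, f (σ i) < f (σ k)) : (Ici k).image σ = thresholdSet f (σ k) := by
  ext v
  obtain ⟨i, rfl⟩ := hσ v
  simp only [thresholdSet, mem_image, mem_Ici, mem_filter, mem_univ, true_and]
  constructor
  · rintro ⟨j, hkj, hj⟩
    exact hj ▸ hmono hkj
  · exact fun hki => ⟨i, not_lt.1 fun hik => (hk i hik).not_ge hki, rfl⟩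

/-- At a strict increase of the sorted values the tail of `sortedEnum f` is a threshold set;
elsewhere the factor `f (σ (j + 1)) - f (σ j)` vanishes. -/
lemma image_Ici_sortedEnum_mul_sub (T : Finset α → ℝ) (f : α → ℝ) (j : Fin (Fintype.card α))
    (h : (j : ℕ) + 1 < Fintype.card α) :
    T ((Ici (⟨j + 1, h⟩ : Fin _)).image (sortedEnum f)) *
        (f (sortedEnum f ⟨j + 1, h⟩) - f (sortedEnum f j))
      = (f (sortedEnum f ⟨j + 1, h⟩) - f (sortedEnum f j)) *
        T (thresholdSet f (sortedEnum f ⟨j + 1, h⟩)) := by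
  rcases (monotone_sortedEnum f (show j ≤ ⟨j + 1, h⟩ from Fin.le_def.2 (Nat.le_succ _))).eq_or_lt
    with heq | hlt
  · rw [show f (sortedEnum f ⟨j + 1, h⟩) - f (sortedEnum f j) = 0 from sub_eq_zero.2 heq.symm]
    ring
  · rw [image_Ici_eq_thresholdSet (sortedEnum_surjective f) (monotone_sortedEnum f) fun i hi =>
      (monotone_sortedEnum f (show i ≤ j from Nat.le_of_lt_succ hi)).trans_lt hlt, mul_comm]

lemma sum_dite_succ_sub {m : ℕ} (a : Fin m → ℝ) (hm : 0 < m) :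
    ∑ j : Fin m, (if h : (j : ℕ) + 1 < m then a ⟨j + 1, h⟩ - a j else a ⟨0, hm⟩)
      = a ⟨m - 1, by omega⟩ := by
  set F : ℕ → ℝ := fun n => if h : n < m then a ⟨n, h⟩ else 0
  have hF : ∀ j : Fin m, a j = F j := fun j => by simp [F]
  have hterm : ∀ j : Fin m, (if h : (j : ℕ) + 1 < m then a ⟨j + 1, h⟩ - a j else a ⟨0, hm⟩)
      = if (j : ℕ) + 1 < m then F (j + 1) - F j else F 0 := fun j => by
    split_ifs with h
    · simp only [F, dif_pos h, dif_pos j.isLt]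
    · simp only [F, dif_pos hm]
  obtain ⟨n, rfl⟩ : ∃ n, m = n + 1 := ⟨m - 1, by omega⟩
  rw [sum_congr rfl fun j _ => hterm j,
    Fin.sum_univ_eq_sum_range (fun j => if j + 1 < n + 1 then F (j + 1) - F j else F 0),
    sum_range_succ, sum_congr rfl fun j hj => if_pos (by simpa using mem_range.1 hj),
    sum_range_sub, if_neg (by omega), hF]
  simp

theorem lovasz_eq_sum_thresholdSet [Nonempty α] {f : α → ℝ} (hf : ∀ i, 0 ≤ f i) :
    ∃ (c : Fin (Fintype.card α) → ℝ) (x : Fin (Fintype.card α) → α),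
      (∀ j, 0 ≤ c j) ∧ (∀ j, c j ≠ 0 → 0 < f (x j)) ∧
      (∃ i₀, (∀ i, f i ≤ f i₀) ∧ ∑ j, c j = f i₀) ∧
      ∀ T : Finset α → ℝ, lovasz T f = ∑ j, c j * T (thresholdSet f (x j)) := by
  set m := Fintype.card α
  have hm : 0 < m := Fintype.card_pos
  set σ := sortedEnum f
  have hmono : ∀ {i j}, i ≤ j → f (σ i) ≤ f (σ j) := fun h => monotone_sortedEnum f h
  have hsucc : ∀ (j : Fin m) (h : (j : ℕ) + 1 < m), j ≤ ⟨j + 1, h⟩ :=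
    fun j _ => Fin.le_def.2 (Nat.le_succ _)
  -- The `j`-th coefficient is the jump of `f ∘ σ` just after `j`; the last index carries the
  -- minimum `f (σ 0)`, which goes with the threshold set `univ`.
  refine ⟨fun j => if h : (j : ℕ) + 1 < m then f (σ ⟨j + 1, h⟩) - f (σ j) else f (σ ⟨0, hm⟩),
    fun j => if h : (j : ℕ) + 1 < m then σ ⟨j + 1, h⟩ else σ ⟨0, hm⟩, fun j => ?_, fun j => ?_,
    ⟨σ ⟨m - 1, by omega⟩, fun i => ?_, sum_dite_succ_sub (f ∘ σ) hm⟩, fun T => ?_⟩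
  · dsimp only
    split_ifs with h
    · exact sub_nonneg.2 (hmono (hsucc j h))
    · exact hf _
  · dsimp only
    split_ifs with h
    · exact fun hne =>
        (hf _).trans_lt <| (hmono (hsucc j h)).lt_of_ne fun heq => hne (by simp [heq])
    · exact fun hne => (hf _).lt_of_ne' hne
  · obtain ⟨k, rfl⟩ := sortedEnum_surjective f i
    exact hmono (Fin.le_def.2 (by simp only; omega))
  · have hterm : ∀ j : Fin m,
        (if h : (j : ℕ) + 1 < m then f (σ ⟨j + 1, h⟩) - f (σ j) else f (σ ⟨0, hm⟩)) *
          T (thresholdSet f (if h : (j : ℕ) + 1 < m then σ ⟨j + 1, h⟩ else σ ⟨0, hm⟩))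
        = (if h : (j : ℕ) + 1 < m then
            T ((Ici (⟨j + 1, h⟩ : Fin m)).image σ) * (f (σ ⟨j + 1, h⟩) - f (σ j)) else 0)
          + if (j : ℕ) + 1 < m then 0 else T univ * f (σ ⟨0, hm⟩) := fun j => by
      split_ifs with h
      · rw [image_Ici_sortedEnum_mul_sub]
        ring
      · rw [thresholdSet_eq_univ fun i => ?_]
        · ring
        · obtain ⟨k, rfl⟩ := sortedEnum_surjective f i
          exact hmono (Fin.le_def.2 (Nat.zero_le _))
    rw [sum_congr rfl fun j _ => hterm j, sum_add_distrib, lovasz_eq_sortedEnum, dif_pos hm,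
      sum_eq_single (⟨m - 1, by omega⟩ : Fin m) (fun j _ hj => if_pos ?_) (by simp),
      if_neg (by simp only; omega)]
    have := Fin.val_ne_of_ne hj
    simp only at this
    omega

lemma thresholdSet_nonempty (f : α → ℝ) (i : α) : (thresholdSet f i).Nonempty :=
  ⟨i, by simp [thresholdSet]⟩

lemma mul_lovasz_le_lovasz [Nonempty α] {f : α → ℝ} (hf : ∀ i, 0 ≤ f i) {r : ℝ}
    {T₁ T₂ : Finset α → ℝ} (h : ∀ i, r * T₁ (thresholdSet f i) ≤ T₂ (thresholdSet f i)) :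
    r * lovasz T₁ f ≤ lovasz T₂ f := by
  obtain ⟨c, x, hc, -, -, hT⟩ := lovasz_eq_sum_thresholdSet hf
  rw [hT, hT, mul_sum]
  exact sum_le_sum fun j _ => by
    rw [mul_left_comm]
    exact mul_le_mul_of_nonneg_left (h (x j)) (hc j)

lemma lovasz_pos {T : Finset α → ℝ} (hT : ∀ A : Finset α, A.Nonempty → 0 < T A) {f : α → ℝ}
    (hf : ∀ i, 0 ≤ f i) (hf0 : f ≠ 0) : 0 < lovasz T f := by
  obtain ⟨v, hv⟩ := Function.ne_iff.1 hf0
  have : Nonempty α := ⟨v⟩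
  obtain ⟨c, x, hc, -, ⟨i₀, hi₀, hsum⟩, hT'⟩ := lovasz_eq_sum_thresholdSet hf
  obtain ⟨j, hj⟩ : ∃ j, c j ≠ 0 := by
    by_contra! h
    simp only [h, sum_const_zero] at hsum
    exact hv (le_antisymm ((hi₀ v).trans hsum.ge) (hf v))
  rw [hT']
  exact sum_pos' (fun j _ => mul_nonneg (hc j) (hT _ (thresholdSet_nonempty f _)).le)
    ⟨j, mem_univ j, mul_pos ((hc j).lt_of_ne' hj) (hT _ (thresholdSet_nonempty f _))⟩

lemma lovasz_indicator (T : Finset α → ℝ) {A : Finset α} (hA : A.Nonempty) :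
    lovasz T (fun v => if v ∈ A then 1 else 0) = T A := by
  obtain ⟨a, ha⟩ := hA
  have : Nonempty α := ⟨a⟩
  set f : α → ℝ := fun v => if v ∈ A then 1 else 0
  have hf : ∀ v, 0 ≤ f v := fun v => by positivity
  have hf_pos : ∀ v, 0 < f v → thresholdSet f v = A := fun v hv => by
    have hvA : v ∈ A := by by_contra h; simp [f, h] at hv
    ext u
    by_cases hu : u ∈ A <;> simp [thresholdSet, f, hu, hvA]
  obtain ⟨c, x, -, hcx, ⟨i₀, hi₀, hsum⟩, hT⟩ := lovasz_eq_sum_thresholdSet hf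
  have hi₀A : i₀ ∈ A := by
    by_contra h
    have := hi₀ a
    norm_num [f, ha, h] at this
  have hterm : ∀ j, c j * T (thresholdSet f (x j)) = c j * T A := fun j => by
    rcases eq_or_ne (c j) 0 with h | h
    · simp [h]
    · rw [hf_pos _ (hcx j h)]
  rw [hT, sum_congr rfl fun j _ => hterm j, ← sum_mul, hsum]
  simp [f, hi₀A]

lemma isLeast_lovasz_ratio {T₁ T₂ : Finset α → ℝ} (hT₁ : ∀ A : Finset α, A.Nonempty → 0 < T₁ A)
    {ρ : ℝ} (hρ : IsLeast {x | ∃ A : Finset α, A.Nonempty ∧ x = T₂ A / T₁ A} ρ) :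
    IsLeast {x | ∃ f : α → ℝ, (∀ i, 0 ≤ f i) ∧ f ≠ 0 ∧ x = lovasz T₂ f / lovasz T₁ f} ρ := by
  obtain ⟨⟨A, hA, rfl⟩, hle⟩ := hρ
  obtain ⟨a, ha⟩ := hA
  have : Nonempty α := ⟨a⟩
  refine ⟨⟨fun v => if v ∈ A then 1 else 0, fun v => by positivity,
    Function.ne_iff.2 ⟨a, by simp [ha]⟩, by simp only [lovasz_indicator _ ⟨a, ha⟩]⟩, ?_⟩
  rintro _ ⟨f, hf, hf0, rfl⟩
  rw [le_div_iff₀ (lovasz_pos hT₁ hf hf0)]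
  exact mul_lovasz_le_lovasz hf fun i => (le_div_iff₀ (hT₁ _ (thresholdSet_nonempty f i))).1
    (hle ⟨_, thresholdSet_nonempty f i, rfl⟩)

lemma thresholdSet_ratio_le_lovasz_ratio {T₁ T₂ : Finset α → ℝ}
    (hT₁ : ∀ A : Finset α, A.Nonempty → 0 < T₁ A) {f : α → ℝ} (hf : ∀ i, 0 ≤ f i) (hf0 : f ≠ 0)
    {i : α} (hi : ∀ i', T₂ (thresholdSet f i) / T₁ (thresholdSet f i)
      ≤ T₂ (thresholdSet f i') / T₁ (thresholdSet f i')) :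
    T₂ (thresholdSet f i) / T₁ (thresholdSet f i) ≤ lovasz T₂ f / lovasz T₁ f := by
  have : Nonempty α := ⟨i⟩
  rw [le_div_iff₀ (lovasz_pos hT₁ hf hf0)]
  exact mul_lovasz_le_lovasz hf fun i' =>
    (le_div_iff₀ (hT₁ _ (thresholdSet_nonempty f i'))).1 (hi i')

end Lovasz

section PenalizedRatio

variable {α : Type*} {assoc vol R : Finset α → ℝ}
  {Feasible : Finset α → Prop} {A₀ : Finset α} {ρ : ℝ}

lemma exists_isLeast_feasible_ratio [Fintype α] (hA₀ : Feasible A₀) :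
    ∃ ρ, IsLeast {x | ∃ A, Feasible A ∧ x = vol A / assoc A} ρ := by
  classical
  obtain ⟨A, hA, hmin⟩ := exists_min_image (univ.filter Feasible) (fun A => vol A / assoc A)
    ⟨A₀, by simp [hA₀]⟩
  exact ⟨_, ⟨A, (mem_filter.1 hA).2, rfl⟩, by rintro _ ⟨B, hB, rfl⟩; exact hmin B (by simp [hB])⟩

lemma isGreatest_inv_ratio (hassoc : ∀ A : Finset α, A.Nonempty → 0 < assoc A)
    (hvol : ∀ A, Feasible A → 0 < vol A) (hFeas : ∀ A, Feasible A → A.Nonempty)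
    (hρ : IsLeast {x | ∃ A, Feasible A ∧ x = vol A / assoc A} ρ) :
    IsGreatest {x | ∃ A, Feasible A ∧ x = assoc A / vol A} ρ⁻¹ := by
  obtain ⟨⟨A, hA, rfl⟩, hle⟩ := hρ
  refine ⟨⟨A, hA, inv_div _ _⟩, ?_⟩
  rintro _ ⟨B, hB, rfl⟩
  rw [← inv_div]
  exact inv_anti₀ (div_pos (hvol A hA) (hassoc A (hFeas A hA))) (hle ⟨B, hB, rfl⟩)

lemma isLeast_penalized_ratio (hFeas : ∀ A, Feasible A → A.Nonempty)
    (hR_feas : ∀ A, Feasible A → R A = vol A) (hA₀ : Feasible A₀)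
    (hR_infeas : ∀ A, A.Nonempty → ¬ Feasible A → vol A₀ / assoc A₀ < R A / assoc A)
    (hρ : IsLeast {x | ∃ A, Feasible A ∧ x = vol A / assoc A} ρ) :
    IsLeast {x | ∃ A : Finset α, A.Nonempty ∧ x = R A / assoc A} ρ := by
  obtain ⟨⟨A, hA, rfl⟩, hle⟩ := hρ
  refine ⟨⟨A, hFeas A hA, by rw [hR_feas A hA]⟩, ?_⟩
  rintro _ ⟨B, hB, rfl⟩
  by_cases hBf : Feasible B
  · rw [hR_feas B hBf]
    exact hle ⟨B, hBf, rfl⟩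
  · exact ((hle ⟨A₀, hA₀, rfl⟩).trans_lt (hR_infeas B hB hBf)).le

theorem sSup_ratio_eq_inv_sInf_lovasz_ratio_and_thresholdSet [Fintype α] [DecidableEq α]
    (hassoc : ∀ A : Finset α, A.Nonempty → 0 < assoc A) (hvol : ∀ A, Feasible A → 0 < vol A)
    (hFeas : ∀ A, Feasible A → A.Nonempty) (hR_feas : ∀ A, Feasible A → R A = vol A)
    (hA₀ : Feasible A₀)
    (hR_infeas : ∀ A, A.Nonempty → ¬ Feasible A → vol A₀ / assoc A₀ < R A / assoc A) :
    sSup {x | ∃ A, Feasible A ∧ x = assoc A / vol A}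
      = (sInf {x | ∃ f : α → ℝ, (∀ i, 0 ≤ f i) ∧ f ≠ 0 ∧ x = lovasz R f / lovasz assoc f})⁻¹
    ∧ ∀ f : α → ℝ, (∀ i, 0 ≤ f i) → f ≠ 0 →
        lovasz R f / lovasz assoc f
          = sInf {x | ∃ f' : α → ℝ, (∀ i, 0 ≤ f' i) ∧ f' ≠ 0 ∧
              x = lovasz R f' / lovasz assoc f'} →
        ∀ i : α,
          (∀ i', R (thresholdSet f i) / assoc (thresholdSet f i)
              ≤ R (thresholdSet f i') / assoc (thresholdSet f i')) →
          Feasible (thresholdSet f i)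
          ∧ ∀ B, Feasible B → assoc B / vol B
              ≤ assoc (thresholdSet f i) / vol (thresholdSet f i) := by
  obtain ⟨ρ, hρ⟩ := exists_isLeast_feasible_ratio (vol := vol) (assoc := assoc) hA₀
  have hsInf := (isLeast_lovasz_ratio hassoc
    (isLeast_penalized_ratio hFeas hR_feas hA₀ hR_infeas hρ)).csInf_eq
  have hsSup := isGreatest_inv_ratio hassoc hvol hFeas hρ
  refine ⟨by rw [hsSup.csSup_eq, hsInf], fun f hf hf0 hfmin i hi => ?_⟩
  set A := thresholdSet f i
  have hA : A.Nonempty := thresholdSet_nonempty f i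
  have hAρ : R A / assoc A ≤ ρ := by
    simpa only [hfmin, hsInf] using thresholdSet_ratio_le_lovasz_ratio hassoc hf hf0 hi
  have hAf : Feasible A := by
    by_contra h
    exact ((hρ.2 ⟨A₀, hA₀, rfl⟩).trans_lt (hR_infeas A hA h)).not_ge hAρ
  refine ⟨hAf, fun B hB => ?_⟩
  calc assoc B / vol B ≤ ρ⁻¹ := hsSup.2 ⟨B, hB, rfl⟩
    _ ≤ (vol A / assoc A)⁻¹ :=
      inv_anti₀ (div_pos (hvol A hAf) (hassoc A hA)) (hR_feas A hAf ▸ hAρ)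
    _ = assoc A / vol A := inv_div _ _

end PenalizedRatio

lemma penalty_eq_zero {ι β : Type*} [Fintype ι] (M : ι → β → ℝ) (k l : ι → ℝ)
    (dist : β → β → ℝ) (d0 : ℝ) {A : Finset β}
    (hb : ∀ j, k j ≤ ∑ i ∈ A, M j i ∧ ∑ i ∈ A, M j i ≤ l j)
    (hd : ∀ u ∈ A, ∀ v ∈ A, dist u v ≤ d0) :
    (∑ j, max 0 ((∑ i ∈ A, M j i) - l j)) + (∑ j, max 0 (k j - ∑ i ∈ A, M j i))
      + ∑ u ∈ A, ∑ v ∈ A, max 0 (dist u v - d0) = 0 := by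
  rw [sum_eq_zero fun j _ => max_eq_left (sub_nonpos.2 (hb j).2),
    sum_eq_zero fun j _ => max_eq_left (sub_nonpos.2 (hb j).1),
    sum_eq_zero fun u hu => sum_eq_zero fun v hv => max_eq_left (sub_nonpos.2 (hd u hu v hv))]
  norm_num

lemma assoc_le_sum_deg {V : Type*} [Fintype V] [DecidableEq V] {w : V → V → ℝ}
    (hw_symm : ∀ i j, w i j = w j i) (hw_nonneg : ∀ i j, 0 ≤ w i j) {S : Finset V}
    (A : Finset (Vp S)) :
    (∑ i ∈ A, ∑ j, w i.1 j) - (∑ i ∈ A, ∑ j ∈ Aᶜ, w i.1 j.1) + (∑ i ∈ A, ∑ j ∈ S, w i.1 j)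
      + (∑ i ∈ S, ∑ j ∈ S, w i j) * (if A = ∅ then 0 else 1) ≤ ∑ i, ∑ j, w i j := by
  have hsub : ∀ F : V → ℝ, ∑ i : Vp S, F i.1 = ∑ i ∈ Sᶜ, F i := fun F =>
    (sum_subtype Sᶜ (fun _ => mem_compl) F).symm
  have hle : ∀ {F : V → ℝ}, (∀ i, 0 ≤ F i) → ∑ i ∈ A, F i.1 ≤ ∑ i ∈ Sᶜ, F i := fun hF =>
    hsub _ ▸ sum_le_sum_of_subset_of_nonneg (subset_univ A) fun i _ _ => hF i.1
  have hcut : 0 ≤ ∑ i ∈ A, ∑ j ∈ Aᶜ, w i.1 j.1 :=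
    sum_nonneg fun _ _ => sum_nonneg fun _ _ => hw_nonneg _ _
  have hμ : (∑ i ∈ S, ∑ j ∈ S, w i j) * (if A = ∅ then 0 else 1) ≤ ∑ i ∈ S, ∑ j ∈ S, w i j := by
    have : 0 ≤ ∑ i ∈ S, ∑ j ∈ S, w i j := sum_nonneg fun _ _ => sum_nonneg fun _ _ => hw_nonneg _ _
    split_ifs <;> linarith
  have hS : ∑ i ∈ Sᶜ, ∑ j ∈ S, w i j + ∑ i ∈ S, ∑ j ∈ S, w i j = ∑ i ∈ S, ∑ j, w i j := by
    rw [sum_compl_add_sum, sum_comm]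
    exact sum_congr rfl fun i _ => sum_congr rfl fun j _ => hw_symm j i
  have hdeg := hle (F := fun i => ∑ j, w i j) fun i => sum_nonneg fun j _ => hw_nonneg i j
  have hdegS := hle (F := fun i => ∑ j ∈ S, w i j) fun i => sum_nonneg fun j _ => hw_nonneg i j
  have htotal := sum_compl_add_sum S fun i => ∑ j, w i j
  linarith

lemma mul_lt_add_mul_of_div_mul_lt {q a W θ P γ x : ℝ} (hq : 0 ≤ q) (haW : a ≤ W) (hW : 0 ≤ W)
    (hθ : 0 < θ) (hθP : θ ≤ P) (hγ : W / θ * q < γ) (hx : 0 ≤ x) : q * a < x + γ * P := by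
  have hγ0 : 0 ≤ γ := (by positivity : 0 ≤ W / θ * q).trans hγ.le
  calc q * a ≤ q * W := mul_le_mul_of_nonneg_left haW hq
    _ = W / θ * q * θ := by field_simp
    _ < γ * θ := mul_lt_mul_of_pos_right hγ hθ
    _ ≤ γ * P := mul_le_mul_of_nonneg_left hθP hγ0
    _ ≤ x + γ * P := le_add_of_nonneg_left hx

theorem team_formation_continuous_equivalence_general
    {V : Type*} [Fintype V] [DecidableEq V]
    (w : V → V → ℝ) (hw_symm : ∀ i j, w i j = w j i) (hw_nonneg : ∀ i j, 0 ≤ w i j)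
    (g : V → ℝ) (hg : ∀ i, 0 < g i)
    (S : Finset V)
    (p : ℕ)
    (M : Fin p → Vp S → ℝ) (k l : Fin p → ℝ)
    (dist : Vp S → Vp S → ℝ)
    (d0 : ℝ)
    -- the degree function d, the restricted degrees d^S, and the constants μ_S, ν_S
    (deg : V → ℝ) (hdeg : deg = fun i => ∑ j, w i j)
    (degS : Vp S → ℝ) (hdegS : degS = fun i => ∑ j ∈ S, w i.1 j)
    (muS nuS : ℝ) (hmuS : muS = ∑ i ∈ S, ∑ j ∈ S, w i j) (hnuS : nuS = ∑ i ∈ S, g i)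
    -- assoc_S(A) = vol_d(A) − cut(A, V'∖A) + vol_{d^S}(A) + μ_S·unit(A)
    (assocS : Finset (Vp S) → ℝ)
    (hassocS : assocS = fun A => (∑ i ∈ A, deg i.1) - (∑ i ∈ A, ∑ j ∈ Aᶜ, w i.1 j.1)
        + (∑ i ∈ A, degS i) + muS * (if A = ∅ then 0 else 1))
    -- the penalty function
    (pen : Finset (Vp S) → ℝ)
    (hpen : pen = fun A => if A = ∅ then 0 else
        (∑ j, max 0 ((∑ i ∈ A, M j i) - l j)) + (∑ j, max 0 (k j - ∑ i ∈ A, M j i))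
        + ∑ u ∈ A, ∑ v ∈ A, max 0 (dist u v - d0))
    -- feasibility
    (Feasible : Finset (Vp S) → Prop)
    (hFeas : Feasible = fun A => A.Nonempty
        ∧ (∀ j, k j ≤ (∑ i ∈ A, M j i) ∧ (∑ i ∈ A, M j i) ≤ l j)
        ∧ ∀ u ∈ A, ∀ v ∈ A, dist u v ≤ d0)
    -- assumptions of the theorem
    (hassoc_pos : ∀ A : Finset (Vp S), A.Nonempty → 0 < assocS A)
    (A0 : Finset (Vp S)) (hA0 : Feasible A0)
    (θ : ℝ) (hθ : 0 < θ)
    (hθpen : ∀ A : Finset (Vp S), A.Nonempty → ¬ Feasible A → θ ≤ pen A)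
    (γ : ℝ)
    (hγ : ((∑ i, deg i) / θ) * (((∑ i ∈ A0, g i.1) + nuS) / assocS A0) < γ)
    -- R(A) = vol_g(A) + ν_S·unit(A) + γ·pen(A)
    (R : Finset (Vp S) → ℝ)
    (hR : R = fun A => (∑ i ∈ A, g i.1) + nuS * (if A = ∅ then 0 else 1) + γ * pen A) :
    -- 1) max over feasible sets of the density = reciprocal of the continuous infimum
    sSup {x : ℝ | ∃ A : Finset (Vp S), Feasible A ∧
          x = assocS A / ((∑ i ∈ A, g i.1) + nuS)}
      = (sInf {x : ℝ | ∃ f : Vp S → ℝ, (∀ i, 0 ≤ f i) ∧ f ≠ 0 ∧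
          x = lovasz R f / lovasz assocS f})⁻¹
    -- 2) optimal thresholding of a continuous minimizer yields a feasible maximizer
    ∧ ∀ f : Vp S → ℝ, (∀ i, 0 ≤ f i) → f ≠ 0 →
        lovasz R f / lovasz assocS f
          = sInf {x : ℝ | ∃ f' : Vp S → ℝ, (∀ i, 0 ≤ f' i) ∧ f' ≠ 0 ∧
              x = lovasz R f' / lovasz assocS f'} →
        ∀ i : Vp S,
          (∀ i' : Vp S, R (thresholdSet f i) / assocS (thresholdSet f i)
              ≤ R (thresholdSet f i') / assocS (thresholdSet f i')) →
          Feasible (thresholdSet f i)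
          ∧ ∀ B : Finset (Vp S), Feasible B →
              assocS B / ((∑ i ∈ B, g i.1) + nuS)
                ≤ assocS (thresholdSet f i) / ((∑ j ∈ thresholdSet f i, g j.1) + nuS) := by
  have hFne : ∀ A, Feasible A → A.Nonempty := fun A hA => (hFeas ▸ hA).1
  have hnuS_nonneg : 0 ≤ nuS := hnuS ▸ sum_nonneg fun i _ => (hg i).le
  have hvol : ∀ A : Finset (Vp S), A.Nonempty → 0 < ∑ i ∈ A, g i.1 + nuS := fun A hA =>
    add_pos_of_pos_of_nonneg (sum_pos (fun i _ => hg i.1) hA) hnuS_nonneg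
  have hR_feas : ∀ A, Feasible A → R A = ∑ i ∈ A, g i.1 + nuS := by
    intro A hA
    obtain ⟨hA, hb, hd⟩ := hFeas ▸ hA
    simp only [hR, hpen, if_neg hA.ne_empty, penalty_eq_zero M k l dist d0 hb hd]
    ring
  have hR_infeas : ∀ A, A.Nonempty → ¬ Feasible A →
      (∑ i ∈ A0, g i.1 + nuS) / assocS A0 < R A / assocS A := by
    intro A hA hAf
    have hassoc_le : assocS A ≤ ∑ i, deg i := by
      subst hassocS hdeg hdegS hmuS
      exact assoc_le_sum_deg hw_symm hw_nonneg A
    have hdeg_nonneg : 0 ≤ ∑ i, deg i := by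
      rw [hdeg]
      exact sum_nonneg fun i _ => sum_nonneg fun j _ => hw_nonneg i j
    have hA0ne := hFne A0 hA0
    rw [lt_div_iff₀ (hassoc_pos A hA), hR]
    simp only [if_neg hA.ne_empty, mul_one]
    exact mul_lt_add_mul_of_div_mul_lt (div_nonneg (hvol A0 hA0ne).le (hassoc_pos A0 hA0ne).le)
      hassoc_le hdeg_nonneg hθ (hθpen A hA hAf) hγ
      (add_nonneg (sum_nonneg fun i _ => (hg i.1).le) hnuS_nonneg)
  exact sSup_ratio_eq_inv_sInf_lovasz_ratio_and_thresholdSet hassoc_pos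
    (fun A hA => hvol A (hFne A hA)) hFne hR_feas hA0 hR_infeas

/-- **Equivalence of the team formation problem with the continuous problem.** For `γ` above
the exact-penalty threshold and `R(A) = vol_g(A) + ν_S·unit(A) + γ·pen(A)`, the maximum of
`assoc_S(A)/(vol_g(A) + ν_S)` over feasible `A` equals the reciprocal of the infimum of
`R^L(f)/assoc_S^L(f)` over `f ≥ 0`, `f ≠ 0`; and optimal thresholding of a minimizer `f*`
yields a feasible set maximizing `assoc_S(A)/(vol_g(A) + ν_S)`. -/
theorem team_formation_continuous_equivalence
    {V : Type*} [Fintype V] [DecidableEq V] (hV : Nonempty V)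
    (w : V → V → ℝ) (hw_symm : ∀ i j, w i j = w j i) (hw_nonneg : ∀ i j, 0 ≤ w i j)
    (g : V → ℝ) (hg : ∀ i, 0 < g i)
    (S : Finset V) (hVp : Nonempty (Vp S))
    (p : ℕ) (hp : 1 ≤ p)
    (M : Fin p → Vp S → ℝ) (hM : ∀ j i, 0 ≤ M j i) (k l : Fin p → ℝ)
    (dist : Vp S → Vp S → ℝ) (hdist_symm : ∀ u v, dist u v = dist v u)
    (hdist_nonneg : ∀ u v, 0 ≤ dist u v) (d0 : ℝ) (hd0 : 0 ≤ d0)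
    -- the degree function d, the restricted degrees d^S, and the constants μ_S, ν_S
    (deg : V → ℝ) (hdeg : deg = fun i => ∑ j, w i j)
    (degS : Vp S → ℝ) (hdegS : degS = fun i => ∑ j ∈ S, w i.1 j)
    (muS nuS : ℝ) (hmuS : muS = ∑ i ∈ S, ∑ j ∈ S, w i j) (hnuS : nuS = ∑ i ∈ S, g i)
    -- assoc_S(A) = vol_d(A) − cut(A, V'∖A) + vol_{d^S}(A) + μ_S·unit(A)
    (assocS : Finset (Vp S) → ℝ)
    (hassocS : assocS = fun A => (∑ i ∈ A, deg i.1) - (∑ i ∈ A, ∑ j ∈ Aᶜ, w i.1 j.1)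
        + (∑ i ∈ A, degS i) + muS * (if A = ∅ then 0 else 1))
    -- the penalty function
    (pen : Finset (Vp S) → ℝ)
    (hpen : pen = fun A => if A = ∅ then 0 else
        (∑ j, max 0 ((∑ i ∈ A, M j i) - l j)) + (∑ j, max 0 (k j - ∑ i ∈ A, M j i))
        + ∑ u ∈ A, ∑ v ∈ A, max 0 (dist u v - d0))
    -- feasibility
    (Feasible : Finset (Vp S) → Prop)
    (hFeas : Feasible = fun A => A.Nonempty
        ∧ (∀ j, k j ≤ (∑ i ∈ A, M j i) ∧ (∑ i ∈ A, M j i) ≤ l j)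
        ∧ ∀ u ∈ A, ∀ v ∈ A, dist u v ≤ d0)
    -- assumptions of the theorem
    (hassoc_pos : ∀ A : Finset (Vp S), A.Nonempty → 0 < assocS A)
    (A0 : Finset (Vp S)) (hA0 : Feasible A0)
    (θ : ℝ) (hθ : 0 < θ)
    (hθpen : ∀ A : Finset (Vp S), A.Nonempty → ¬ Feasible A → θ ≤ pen A)
    (γ : ℝ)
    (hγ : ((∑ i, deg i) / θ) * (((∑ i ∈ A0, g i.1) + nuS) / assocS A0) < γ)
    -- R(A) = vol_g(A) + ν_S·unit(A) + γ·pen(A)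
    (R : Finset (Vp S) → ℝ)
    (hR : R = fun A => (∑ i ∈ A, g i.1) + nuS * (if A = ∅ then 0 else 1) + γ * pen A) :
    -- 1) max over feasible sets of the density = reciprocal of the continuous infimum
    sSup {x : ℝ | ∃ A : Finset (Vp S), Feasible A ∧
          x = assocS A / ((∑ i ∈ A, g i.1) + nuS)}
      = (sInf {x : ℝ | ∃ f : Vp S → ℝ, (∀ i, 0 ≤ f i) ∧ f ≠ 0 ∧
          x = lovasz R f / lovasz assocS f})⁻¹
    -- 2) optimal thresholding of a continuous minimizer yields a feasible maximizer
    ∧ ∀ f : Vp S → ℝ, (∀ i, 0 ≤ f i) → f ≠ 0 →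
        lovasz R f / lovasz assocS f
          = sInf {x : ℝ | ∃ f' : Vp S → ℝ, (∀ i, 0 ≤ f' i) ∧ f' ≠ 0 ∧
              x = lovasz R f' / lovasz assocS f'} →
        ∀ i : Vp S,
          (∀ i' : Vp S, R (thresholdSet f i) / assocS (thresholdSet f i)
              ≤ R (thresholdSet f i') / assocS (thresholdSet f i')) →
          Feasible (thresholdSet f i)
          ∧ ∀ B : Finset (Vp S), Feasible B →
              assocS B / ((∑ i ∈ B, g i.1) + nuS)
                ≤ assocS (thresholdSet f i) / ((∑ j ∈ thresholdSet f i, g j.1) + nuS) :=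
  team_formation_continuous_equivalence_general w hw_symm hw_nonneg g hg S p M k l dist d0 deg hdeg
    degS hdegS muS nuS hmuS hnuS assocS hassocS pen hpen Feasible hFeas hassoc_pos A0 hA0 θ hθ hθpen
    γ hγ R hR
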